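/- arXiv:1402.6283 — 4 statements merged into one kernel-verified Lean document; each statement's English description precedes it below -/
import Mathlib

section
/- For a real random variable X with mean 0, variance 1, and finite fourth moment, E[X⁴] = 1 holds if and only if the law of X is the symmetric Bernoulli measure (1/2)δ₋₁ + (1/2)δ₁. -/
/-!
Since `E[(X² - 1)²] = E[X⁴] - 2 E[X²] + 1 = E[X⁴] - 1`, the fourth moment equals one exactly when
`X² = 1` almost surely, i.e. when the law of `X` is carried by `{-1, 1}`. Such a law is
`p δ₋₁ + q δ₁` with `p + q = 1`, and the mean `q - p` vanishes only for `p = q = 1/2`.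
-/

open MeasureTheory
open scoped ENNReal

theorem ae_sq_eq_one_of_integral_pow_four_eq_one {Ω : Type*} [MeasurableSpace Ω]
    {P : Measure Ω} [IsProbabilityMeasure P] {X : Ω → ℝ}
    (hInt2 : Integrable (fun ω => X ω ^ 2) P) (hInt4 : Integrable (fun ω => X ω ^ 4) P)
    (hvar : ∫ ω, X ω ^ 2 ∂P = 1) (h4 : ∫ ω, X ω ^ 4 ∂P = 1) :
    ∀ᵐ ω ∂P, X ω ^ 2 = 1 := by
  have hexpand : (fun ω => (X ω ^ 2 - 1) ^ 2) = fun ω => X ω ^ 4 - 2 * X ω ^ 2 + 1 := by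
    funext ω; ring
  have hIntDiff : Integrable (fun ω => X ω ^ 4 - 2 * X ω ^ 2) P :=
    hInt4.sub (hInt2.const_mul 2)
  have hInt : Integrable (fun ω => (X ω ^ 2 - 1) ^ 2) P := by
    rw [hexpand]; exact hIntDiff.add (integrable_const 1)
  have hzero : ∫ ω, (X ω ^ 2 - 1) ^ 2 ∂P = 0 := by
    rw [hexpand, integral_add hIntDiff (integrable_const 1),
      integral_sub hInt4 (hInt2.const_mul 2), integral_const_mul, h4, hvar]
    norm_num
  have hnonneg : 0 ≤ fun ω => (X ω ^ 2 - 1) ^ 2 := fun ω => sq_nonneg _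
  filter_upwards [(integral_eq_zero_iff_of_nonneg hnonneg hInt).1 hzero] with ω hω
  exact sub_eq_zero.1 (pow_eq_zero_iff two_ne_zero |>.1 hω)

theorem MeasureTheory.Measure.eq_smul_dirac_add_smul_dirac_of_ae_mem_pair {α : Type*}
    [MeasurableSpace α] [MeasurableSingletonClass α] {μ : Measure α} {a b : α} (hab : a ≠ b)
    (h : ∀ᵐ x ∂μ, x ∈ ({a, b} : Set α)) :
    μ = μ {a} • Measure.dirac a + μ {b} • Measure.dirac b := by
  conv_lhs => rw [← Measure.restrict_eq_self_of_ae_mem h, Set.insert_eq,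
    Measure.restrict_union (Set.disjoint_singleton.2 hab) (measurableSet_singleton b),
    Measure.restrict_singleton, Measure.restrict_singleton]

theorem MeasureTheory.integral_smul_dirac_add_smul_dirac {α E : Type*} [MeasurableSpace α]
    [MeasurableSingletonClass α] [NormedAddCommGroup E] [NormedSpace ℝ E] [CompleteSpace E]
    {p q : ℝ≥0∞} (hp : p ≠ ∞) (hq : q ≠ ∞) (f : α → E) (a b : α) :
    ∫ x, f x ∂(p • Measure.dirac a + q • Measure.dirac b) = p.toReal • f a + q.toReal • f b := by
  rw [integral_add_measure ((integrable_dirac enorm_lt_top).smul_measure hp)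
      ((integrable_dirac enorm_lt_top).smul_measure hq),
    integral_smul_measure, integral_smul_measure, integral_dirac, integral_dirac]

theorem eq_half_smul_dirac_add_half_smul_dirac_of_integral_id_eq_zero {μ : Measure ℝ}
    [IsProbabilityMeasure μ] (hsupp : ∀ᵐ x ∂μ, x ∈ ({-1, 1} : Set ℝ))
    (hmean : ∫ x, x ∂μ = 0) :
    μ = (1 / 2 : ℝ≥0∞) • Measure.dirac (-1 : ℝ) + (1 / 2 : ℝ≥0∞) • Measure.dirac (1 : ℝ) := by
  have hdecomp := Measure.eq_smul_dirac_add_smul_dirac_of_ae_mem_pair (by norm_num) hsupp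
  have htotal : μ {-1} + μ {1} = 1 := by
    simpa using (congrArg (· Set.univ) hdecomp).symm
  have hbalance : μ {-1} = μ {1} := by
    rw [hdecomp, integral_smul_dirac_add_smul_dirac (measure_ne_top _ _) (measure_ne_top _ _)]
      at hmean
    refine (ENNReal.toReal_eq_toReal_iff' (measure_ne_top _ _) (measure_ne_top _ _)).1 ?_
    simp only [smul_eq_mul] at hmean
    linarith
  have hhalf : μ {1} = 1 / 2 := by
    rw [ENNReal.eq_div_iff two_ne_zero ENNReal.ofNat_ne_top, two_mul, ← htotal, hbalance]
  rw [hdecomp, hbalance, hhalf]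

theorem fourth_moment_eq_one_iff_bernoulli_general
    {Ω : Type*} [MeasurableSpace Ω] (P : Measure Ω) [IsProbabilityMeasure P]
    (X : Ω → ℝ) (hX : AEMeasurable X P)
    (hmean : ∫ ω, X ω ∂P = 0)
    (hInt2 : Integrable (fun ω => X ω ^ 2) P) (hvar : ∫ ω, X ω ^ 2 ∂P = 1)
    (hInt4 : Integrable (fun ω => X ω ^ 4) P) :
    ∫ ω, X ω ^ 4 ∂P = 1 ↔
      Measure.map X P =
        (1 / 2 : ENNReal) • Measure.dirac (-1 : ℝ) +
          (1 / 2 : ENNReal) • Measure.dirac (1 : ℝ) := by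
  have : IsProbabilityMeasure (P.map X) := Measure.isProbabilityMeasure_map hX
  constructor
  · intro h4
    have hsupp : ∀ᵐ x ∂P.map X, x ∈ ({-1, 1} : Set ℝ) := by
      rw [ae_map_iff hX (by measurability)]
      filter_upwards [ae_sq_eq_one_of_integral_pow_four_eq_one hInt2 hInt4 hvar h4] with ω hω
      simpa [or_comm] using sq_eq_one_iff.1 hω
    refine eq_half_smul_dirac_add_half_smul_dirac_of_integral_id_eq_zero hsupp ?_
    rwa [integral_map (f := fun x => x) hX aestronglyMeasurable_id]
  · intro hlaw
    rw [← integral_map (f := (· ^ 4)) hX (by fun_prop), hlaw,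
      integral_smul_dirac_add_smul_dirac (by norm_num) (by norm_num)]
    norm_num

theorem fourth_moment_eq_one_iff_bernoulli
    {Ω : Type*} [MeasurableSpace Ω] (P : Measure Ω) [IsProbabilityMeasure P]
    (X : Ω → ℝ) (hX : AEMeasurable X P)
    (hInt1 : Integrable X P) (hmean : ∫ ω, X ω ∂P = 0)
    (hInt2 : Integrable (fun ω => X ω ^ 2) P) (hvar : ∫ ω, X ω ^ 2 ∂P = 1)
    (hInt4 : Integrable (fun ω => X ω ^ 4) P) :
    ∫ ω, X ω ^ 4 ∂P = 1 ↔
      Measure.map X P =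
        (1 / 2 : ENNReal) • Measure.dirac (-1 : ℝ) +
          (1 / 2 : ENNReal) • Measure.dirac (1 : ℝ) :=
  fourth_moment_eq_one_iff_bernoulli_general P X hX hmean hInt2 hvar hInt4
end

section
/- Let μ be a probability measure on ℝ with mean 0, variance 1, and finite fourth moment m₄(μ), and suppose μ = ν^{*N} is the N-fold classical convolution of some probability measure ν. Then the Kolmogorov distance between μ and the standard Gaussian law Φ satisfies d_Kol(μ, Φ) ≤ C·√(m₄(μ) - 3 + 3/N), where C is the universal constant in the Berry–Esseen theorem. -/
open MeasureTheory ProbabilityTheory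

/-- `N`-fold classical convolution power of a measure on `ℝ`
(with the convention that the 0-th power is `δ₀`). -/
noncomputable def convNPow (ν : Measure ℝ) : ℕ → Measure ℝ
  | 0 => Measure.dirac 0
  | n + 1 => Measure.conv (convNPow ν n) ν

/-- Kolmogorov (sup) distance between two measures on `ℝ`,
via their distribution functions. -/
noncomputable def kolDist (μ ν : Measure ℝ) : ℝ :=
  ⨆ x : ℝ, |cdf μ x - cdf ν x|

/-!
If `μ = ν^{*N}` is centered with unit variance, then `ν` is centered with variance `s = 1/N`, and
expanding `(x + y)⁴` under the convolution integral gives `m₄(μ) = N m₄(ν) + 3N(N - 1)s²`, that is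
`m₄(μ) - 3 + 3/N = N m₄(ν)`. Berry–Esseen for `ν` with `n = N` (where the normalisation is the
identity) bounds `d_Kol(μ, Φ)` by `C N E|X|³`, and Cauchy–Schwarz `E|X|³ ≤ √(m₂(ν) m₄(ν))`
turns this into `C √(N m₄(ν))`.
-/

lemma abs_pow_le_one_add_abs_pow {m n : ℕ} (hmn : m ≤ n) (x : ℝ) : |x| ^ m ≤ 1 + |x| ^ n := by
  rcases le_total |x| 1 with hx | hx
  · linarith [pow_le_one₀ (n := m) (abs_nonneg x) hx, pow_nonneg (abs_nonneg x) n]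
  · linarith [pow_le_pow_right₀ hx hmn]

lemma MeasureTheory.Integrable.pow_of_le {α : Type*} [MeasurableSpace α] {μ : Measure α}
    [IsFiniteMeasure μ] {f : α → ℝ} {m n : ℕ} (hmn : m ≤ n) (hf : AEStronglyMeasurable f μ)
    (h : Integrable (fun a => f a ^ n) μ) : Integrable (fun a => f a ^ m) μ :=
  ((integrable_const 1).add h.abs).mono' (hf.pow m) <| ae_of_all _ fun a => by
    simpa only [Real.norm_eq_abs, abs_pow, Pi.add_apply] using abs_pow_le_one_add_abs_pow hmn (f a)

lemma integrable_pow_of_le {μ : Measure ℝ} [IsFiniteMeasure μ] {m n : ℕ} (hmn : m ≤ n)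
    (h : Integrable (fun x : ℝ => x ^ n) μ) : Integrable (fun x : ℝ => x ^ m) μ :=
  h.pow_of_le hmn aestronglyMeasurable_id

lemma integral_conv_eq_integral_prod {P Q : Measure ℝ} [SFinite P] [SFinite Q] {f : ℝ → ℝ}
    (hf : AEStronglyMeasurable f (P.conv Q)) :
    ∫ x, f x ∂(P.conv Q) = ∫ p : ℝ × ℝ, f (p.1 + p.2) ∂(P.prod Q) :=
  integral_map (by fun_prop) hf

lemma integrable_conv_iff_prod {P Q : Measure ℝ} [SFinite P] [SFinite Q] {f : ℝ → ℝ}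
    (hf : AEStronglyMeasurable f (P.conv Q)) :
    Integrable f (P.conv Q) ↔ Integrable (fun p : ℝ × ℝ => f (p.1 + p.2)) (P.prod Q) :=
  integrable_map_measure hf (by fun_prop)

lemma integrable_pow_mul_pow_sub_prod {P Q : Measure ℝ} [IsFiniteMeasure P] [IsFiniteMeasure Q]
    {k n : ℕ} (hkn : k ≤ n) (hP : Integrable (fun x : ℝ => x ^ n) P)
    (hQ : Integrable (fun x : ℝ => x ^ n) Q) :
    Integrable (fun p : ℝ × ℝ => p.1 ^ k * p.2 ^ (n - k)) (P.prod Q) :=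
  (integrable_pow_of_le hkn hP).mul_prod (integrable_pow_of_le (Nat.sub_le n k) hQ)

lemma integrable_add_pow_prod {P Q : Measure ℝ} [IsFiniteMeasure P] [IsFiniteMeasure Q] {n : ℕ}
    (hP : Integrable (fun x : ℝ => x ^ n) P) (hQ : Integrable (fun x : ℝ => x ^ n) Q) :
    Integrable (fun p : ℝ × ℝ => (p.1 + p.2) ^ n) (P.prod Q) := by
  simp_rw [add_pow]
  exact integrable_finsetSum _ fun k hk =>
    (integrable_pow_mul_pow_sub_prod (Finset.mem_range_succ_iff.mp hk) hP hQ).mul_const _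

lemma integrable_pow_conv {P Q : Measure ℝ} [IsFiniteMeasure P] [IsFiniteMeasure Q] {n : ℕ}
    (hP : Integrable (fun x : ℝ => x ^ n) P) (hQ : Integrable (fun x : ℝ => x ^ n) Q) :
    Integrable (fun x : ℝ => x ^ n) (P.conv Q) :=
  (integrable_conv_iff_prod (by fun_prop)).mpr (integrable_add_pow_prod hP hQ)

lemma integral_pow_conv {P Q : Measure ℝ} [IsFiniteMeasure P] [IsFiniteMeasure Q] {n : ℕ}
    (hP : Integrable (fun x : ℝ => x ^ n) P) (hQ : Integrable (fun x : ℝ => x ^ n) Q) :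
    ∫ x, x ^ n ∂(P.conv Q) =
      ∑ k ∈ Finset.range (n + 1), (∫ x, x ^ k ∂P) * (∫ x, x ^ (n - k) ∂Q) * n.choose k := by
  rw [integral_conv_eq_integral_prod (by fun_prop)]
  simp_rw [add_pow]
  rw [integral_finsetSum _ fun k hk =>
    (integrable_pow_mul_pow_sub_prod (Finset.mem_range_succ_iff.mp hk) hP hQ).mul_const _]
  refine Finset.sum_congr rfl fun k _ => ?_
  rw [integral_mul_const, integral_prod_mul (fun x : ℝ => x ^ k) (fun y : ℝ => y ^ (n - k))]

lemma integrable_pow_of_integrable_pow_conv {P Q : Measure ℝ} [SFinite P] [NeZero P]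
    [IsFiniteMeasure Q] {n : ℕ} (h : Integrable (fun x : ℝ => x ^ n) (P.conv Q)) :
    Integrable (fun x : ℝ => x ^ n) Q := by
  have hprod := (integrable_conv_iff_prod (by fun_prop)).mp h
  obtain ⟨a, ha⟩ := hprod.prod_right_ae.exists
  refine ((ha.abs.add (integrable_const (|a| ^ n))).const_mul (2 ^ (n - 1))).mono'
    (by fun_prop) (ae_of_all _ fun y => ?_)
  calc ‖y ^ n‖ = |(a + y) + -a| ^ n := by rw [Real.norm_eq_abs, abs_pow]; ring_nf
    _ ≤ (|a + y| + |a|) ^ n := by gcongr; exact (abs_add_le _ _).trans_eq (by rw [abs_neg])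
    _ ≤ 2 ^ (n - 1) * (|a + y| ^ n + |a| ^ n) := add_pow_le (abs_nonneg _) (abs_nonneg _) n
    _ = 2 ^ (n - 1) * (|(a + y) ^ n| + |a| ^ n) := by rw [abs_pow]

lemma integral_abs_pow_three_le {ν : Measure ℝ} [IsFiniteMeasure ν]
    (h : Integrable (fun x : ℝ => x ^ 4) ν) :
    ∫ x, |x| ^ 3 ∂ν ≤ √(∫ x, x ^ 2 ∂ν) * √(∫ x, x ^ 4 ∂ν) := by
  have h2 : ENNReal.ofReal 2 = 2 := by norm_num
  have habs : MemLp (fun x : ℝ => |x|) (ENNReal.ofReal 2) ν := by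
    rw [h2, memLp_two_iff_integrable_sq (by fun_prop)]
    simpa only [sq_abs] using integrable_pow_of_le (by norm_num) h
  have hsq : MemLp (fun x : ℝ => x ^ 2) (ENNReal.ofReal 2) ν := by
    rw [h2, memLp_two_iff_integrable_sq (by fun_prop)]
    simpa only [← pow_mul] using h
  have holder := integral_mul_le_Lp_mul_Lq_of_nonneg Real.HolderConjugate.two_two
    (ae_of_all _ fun x => abs_nonneg x) (ae_of_all _ fun x => sq_nonneg x) habs hsq
  simp only [Real.rpow_two, sq_abs, ← pow_mul, ← Real.sqrt_eq_rpow] at holder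
  simpa only [pow_succ' |_| 2, sq_abs] using holder

lemma integral_abs_pow_pos_of_integral_sq_pos {μ : Measure ℝ} {n : ℕ} (hn : n ≠ 0)
    (hint : Integrable (fun x : ℝ => |x| ^ n) μ) (h : 0 < ∫ x, x ^ 2 ∂μ) :
    0 < ∫ x, |x| ^ n ∂μ := by
  have hsq : Integrable (fun x : ℝ => x ^ 2) μ := by
    by_contra hsq
    simp [integral_undef hsq] at h
  have hsupp : Function.support (fun x : ℝ => |x| ^ n) = Function.support (fun x : ℝ => x ^ 2) := by
    ext x
    simp [hn]
  rw [integral_pos_iff_support_of_nonneg (fun x => by positivity) hsq] at h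
  rwa [integral_pos_iff_support_of_nonneg (fun x => by positivity) hint, hsupp]

section CenteredConv

variable {P Q : Measure ℝ} [IsProbabilityMeasure P] [IsProbabilityMeasure Q]

lemma integral_id_conv (hP : Integrable (fun x : ℝ => x) P) (hQ : Integrable (fun x : ℝ => x) Q) :
    ∫ x, x ∂(P.conv Q) = ∫ x, x ∂P + ∫ x, x ∂Q := by
  have h := integral_pow_conv (n := 1) (by simpa using hP) (by simpa using hQ)
  simp only [pow_one] at h
  rw [h]
  simp [Finset.sum_range_succ, add_comm]

lemma integral_sq_conv (hP : Integrable (fun x : ℝ => x ^ 2) P)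
    (hQ : Integrable (fun x : ℝ => x ^ 2) Q) (hP0 : ∫ x, x ∂P = 0) (hQ0 : ∫ x, x ∂Q = 0) :
    ∫ x, x ^ 2 ∂(P.conv Q) = ∫ x, x ^ 2 ∂P + ∫ x, x ^ 2 ∂Q := by
  rw [integral_pow_conv hP hQ]
  simp [Finset.sum_range_succ, hP0, hQ0, add_comm]

lemma integral_pow_four_conv (hP : Integrable (fun x : ℝ => x ^ 4) P)
    (hQ : Integrable (fun x : ℝ => x ^ 4) Q) (hP0 : ∫ x, x ∂P = 0) (hQ0 : ∫ x, x ∂Q = 0) :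
    ∫ x, x ^ 4 ∂(P.conv Q) =
      ∫ x, x ^ 4 ∂P + 6 * (∫ x, x ^ 2 ∂P) * (∫ x, x ^ 2 ∂Q) + ∫ x, x ^ 4 ∂Q := by
  rw [integral_pow_conv hP hQ]
  simp only [Nat.reduceAdd, Finset.sum_range_succ, Finset.range_one, Finset.sum_singleton, pow_zero,
    integral_const, probReal_univ, smul_eq_mul, mul_one, tsub_zero, one_mul, Nat.choose_zero_right,
    Nat.cast_one, pow_one, hP0, Nat.add_one_sub_one, zero_mul, Nat.choose_one_right, Nat.cast_ofNat,
    add_zero, Nat.reduceSub, Nat.choose_two_right, Nat.reduceMul, Nat.reduceDiv, hQ0, mul_zero,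
    Nat.choose_succ_self_right, tsub_self, Nat.choose_self]
  ring

end CenteredConv

instance isProbabilityMeasure_convNPow (ν : Measure ℝ) [IsProbabilityMeasure ν] (n : ℕ) :
    IsProbabilityMeasure (convNPow ν n) := by
  induction n with
  | zero => rw [convNPow]; infer_instance
  | succ n ih => rw [convNPow]; infer_instance

section ConvNPowMoments

variable {ν : Measure ℝ} [IsProbabilityMeasure ν]

lemma integrable_pow_convNPow {k : ℕ} (hν : Integrable (fun x : ℝ => x ^ k) ν) (n : ℕ) :
    Integrable (fun x : ℝ => x ^ k) (convNPow ν n) := by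
  induction n with
  | zero => exact integrable_dirac (by simp)
  | succ n ih => exact integrable_pow_conv ih hν

lemma integral_id_convNPow (hν : Integrable (fun x : ℝ => x) ν) (n : ℕ) :
    ∫ x, x ∂(convNPow ν n) = n * ∫ x, x ∂ν := by
  have hνn (n : ℕ) : Integrable (fun x : ℝ => x) (convNPow ν n) := by
    simpa using integrable_pow_convNPow (k := 1) (by simpa using hν) n
  induction n with
  | zero => simp [convNPow]
  | succ n ih =>
    rw [convNPow, integral_id_conv (hνn n) hν, ih]
    push_cast
    ring

lemma integral_id_convNPow_eq_zero {k : ℕ} (hk : 1 ≤ k) (hν : Integrable (fun x : ℝ => x ^ k) ν)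
    (hmean : ∫ x, x ∂ν = 0) (n : ℕ) : ∫ x, x ∂(convNPow ν n) = 0 := by
  rw [integral_id_convNPow (by simpa using integrable_pow_of_le hk hν), hmean, mul_zero]

lemma integral_sq_convNPow (hν : Integrable (fun x : ℝ => x ^ 2) ν) (hmean : ∫ x, x ∂ν = 0)
    (n : ℕ) : ∫ x, x ^ 2 ∂(convNPow ν n) = n * ∫ x, x ^ 2 ∂ν := by
  induction n with
  | zero => simp [convNPow]
  | succ n ih =>
    rw [convNPow, integral_sq_conv (integrable_pow_convNPow hν n) hν
      (integral_id_convNPow_eq_zero one_le_two hν hmean n) hmean, ih]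
    push_cast
    ring

lemma integral_pow_four_convNPow (hν : Integrable (fun x : ℝ => x ^ 4) ν)
    (hmean : ∫ x, x ∂ν = 0) (n : ℕ) :
    ∫ x, x ^ 4 ∂(convNPow ν n) =
      n * ∫ x, x ^ 4 ∂ν + 3 * n * (n - 1) * (∫ x, x ^ 2 ∂ν) ^ 2 := by
  induction n with
  | zero => simp [convNPow]
  | succ n ih =>
    rw [convNPow, integral_pow_four_conv (integrable_pow_convNPow hν n) hν
      (integral_id_convNPow_eq_zero (by norm_num) hν hmean n) hmean, ih,
      integral_sq_convNPow (integrable_pow_of_le (by norm_num) hν) hmean]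
    push_cast
    ring

end ConvNPowMoments

lemma integrable_pow_of_convNPow {ν : Measure ℝ} [IsProbabilityMeasure ν] {k N : ℕ} (hN : 0 < N)
    (h : Integrable (fun x : ℝ => x ^ k) (convNPow ν N)) : Integrable (fun x : ℝ => x ^ k) ν := by
  obtain ⟨n, rfl⟩ := Nat.exists_eq_add_one.mpr hN
  exact integrable_pow_of_integrable_pow_conv h

lemma integral_id_eq_zero_of_convNPow {ν : Measure ℝ} [IsProbabilityMeasure ν] {N : ℕ}
    (hN : 0 < N) (hν : Integrable (fun x : ℝ => x) ν) (h : ∫ x, x ∂(convNPow ν N) = 0) :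
    ∫ x, x ∂ν = 0 := by
  rw [integral_id_convNPow hν] at h
  exact (mul_eq_zero.mp h).resolve_left (by positivity)

lemma mul_div_sqrt_pow_three_mul_sqrt_le {C m s q N : ℝ} (hC : 0 ≤ C) (hs : 0 < s)
    (hNs : N * s = 1) (hm : m ≤ √s * √q) : C * m / (√s ^ 3 * √N) ≤ C * √(N * q) := by
  have hN : N = s⁻¹ := eq_inv_of_mul_eq_one_left hNs
  have hden : √s ^ 3 * √N = s := by
    rw [hN, Real.sqrt_inv, pow_succ, mul_assoc, mul_inv_cancel₀ (by positivity), mul_one,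
      Real.sq_sqrt hs.le]
  calc C * m / (√s ^ 3 * √N) ≤ C * (√s * √q) / s := by rw [hden]; gcongr
    _ = C * √(N * q) := by
      rw [hN, Real.sqrt_mul (by positivity), Real.sqrt_inv]
      field_simp
      rw [Real.sq_sqrt hs.le]
      ring

lemma kolDist_nonneg (μ ν : Measure ℝ) : 0 ≤ kolDist μ ν :=
  Real.iSup_nonneg fun _ => abs_nonneg _

def BerryEsseenBound (C : ℝ) : Prop :=
  ∀ (ρ : Measure ℝ), IsProbabilityMeasure ρ → ∀ n : ℕ, 0 < n →
    (∫ x, x ∂ρ = 0) → 0 < ∫ x, x ^ 2 ∂ρ →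
    Integrable (fun x => |x| ^ 3) ρ →
    kolDist
      (Measure.map
        (fun x => x / (Real.sqrt (∫ x, x ^ 2 ∂ρ) * Real.sqrt n))
        (convNPow ρ n))
      (gaussianReal 0 1) ≤
      C * (∫ x, |x| ^ 3 ∂ρ) /
        (Real.sqrt (∫ x, x ^ 2 ∂ρ) ^ 3 * Real.sqrt n)

lemma kolDist_convNPow_le_of_berryEsseenBound {C : ℝ} (hBE : BerryEsseenBound C)
    {ν : Measure ℝ} [IsProbabilityMeasure ν] {N : ℕ} (hN : 0 < N) (hmean : ∫ x, x ∂ν = 0)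
    (hvar : N * ∫ x, x ^ 2 ∂ν = 1) (h4 : Integrable (fun x : ℝ => x ^ 4) ν) :
    kolDist (convNPow ν N) (gaussianReal 0 1) ≤ C * √(N * ∫ x, x ^ 4 ∂ν) := by
  have hs : 0 < ∫ x, x ^ 2 ∂ν := pos_of_mul_pos_right (hvar ▸ one_pos) (Nat.cast_nonneg N)
  have h3 : Integrable (fun x : ℝ => |x| ^ 3) ν := by
    simpa only [abs_pow] using (integrable_pow_of_le (by norm_num : 3 ≤ 4) h4).abs
  have hBEν := hBE ν inferInstance N hN hmean hs h3
  set s := ∫ x, x ^ 2 ∂ν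
  have hnorm : √s * √N = 1 := by rw [← Real.sqrt_mul hs.le, mul_comm, hvar, Real.sqrt_one]
  simp only [hnorm, div_one, Measure.map_id'] at hBEν
  have hC : 0 ≤ C := by
    have h := (le_div_iff₀ (by positivity)).mp ((kolDist_nonneg _ _).trans hBEν)
    exact nonneg_of_mul_nonneg_left (by simpa using h)
      (integral_abs_pow_pos_of_integral_sq_pos three_ne_zero h3 hs)
  exact hBEν.trans (mul_div_sqrt_pow_three_mul_sqrt_le hC hs hvar (integral_abs_pow_three_le h4))

theorem kolmogorov_bound_N_divisible_general
    (C : ℝ)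
    -- the Berry–Esseen theorem with constant `C`:
    (hBE : ∀ (ρ : Measure ℝ), IsProbabilityMeasure ρ → ∀ n : ℕ, 0 < n →
      (∫ x, x ∂ρ = 0) → 0 < ∫ x, x ^ 2 ∂ρ →
      Integrable (fun x => |x| ^ 3) ρ →
      kolDist
        (Measure.map
          (fun x => x / (Real.sqrt (∫ x, x ^ 2 ∂ρ) * Real.sqrt n))
          (convNPow ρ n))
        (gaussianReal 0 1) ≤
        C * (∫ x, |x| ^ 3 ∂ρ) /
          (Real.sqrt (∫ x, x ^ 2 ∂ρ) ^ 3 * Real.sqrt n))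
    (μ ν : Measure ℝ) [IsProbabilityMeasure ν]
    (N : ℕ) (hN : 0 < N) (hdiv : μ = convNPow ν N)
    (hmean : ∫ x, x ∂μ = 0) (hvar : ∫ x, x ^ 2 ∂μ = 1)
    (h4 : Integrable (fun x => x ^ 4) μ) :
    kolDist μ (gaussianReal 0 1) ≤
      C * Real.sqrt ((∫ x, x ^ 4 ∂μ) - 3 + 3 / N) := by
  subst hdiv
  have hν4 := integrable_pow_of_convNPow hN h4
  have hν1 : Integrable (fun x : ℝ => x) ν := by
    simpa using integrable_pow_of_le (by norm_num : 1 ≤ 4) hν4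
  have hνmean := integral_id_eq_zero_of_convNPow hN hν1 hmean
  have hνvar : (N : ℝ) * ∫ x, x ^ 2 ∂ν = 1 := by
    rw [← integral_sq_convNPow (integrable_pow_of_le (by norm_num) hν4) hνmean, hvar]
  have hm4 : ∫ x, x ^ 4 ∂(convNPow ν N) - 3 + 3 / N = N * ∫ x, x ^ 4 ∂ν := by
    rw [integral_pow_four_convNPow hν4 hνmean, eq_inv_of_mul_eq_one_right hνvar]
    field_simp
    ring
  rw [hm4]
  exact kolDist_convNPow_le_of_berryEsseenBound hBE hN hνmean hνvar hν4

theorem kolmogorov_bound_N_divisible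
    (C : ℝ)
    -- the Berry–Esseen theorem with constant `C`:
    (hBE : ∀ (ρ : Measure ℝ), IsProbabilityMeasure ρ → ∀ n : ℕ, 0 < n →
      (∫ x, x ∂ρ = 0) → 0 < ∫ x, x ^ 2 ∂ρ →
      Integrable (fun x => |x| ^ 3) ρ →
      kolDist
        (Measure.map
          (fun x => x / (Real.sqrt (∫ x, x ^ 2 ∂ρ) * Real.sqrt n))
          (convNPow ρ n))
        (gaussianReal 0 1) ≤
        C * (∫ x, |x| ^ 3 ∂ρ) /
          (Real.sqrt (∫ x, x ^ 2 ∂ρ) ^ 3 * Real.sqrt n))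
    (μ ν : Measure ℝ) [IsProbabilityMeasure μ] [IsProbabilityMeasure ν]
    (N : ℕ) (hN : 0 < N) (hdiv : μ = convNPow ν N)
    (hmean : ∫ x, x ∂μ = 0) (hvar : ∫ x, x ^ 2 ∂μ = 1)
    (h4 : Integrable (fun x => x ^ 4) μ) :
    kolDist μ (gaussianReal 0 1) ≤
      C * Real.sqrt ((∫ x, x ^ 4 ∂μ) - 3 + 3 / N) :=
  kolmogorov_bound_N_divisible_general C hBE μ ν N hN hdiv hmean hvar h4
end

section
/- Let μ be a probability measure on ℝ with mean 0, variance 1 and finite fourth moment, and suppose μ is N-divisible with respect to classical convolution. Then m₄(μ) - 3 ≥ -2/N, i.e., the kurtosis of an N-divisible probability measure with finite fourth moment is at least -2/N. -/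
open MeasureTheory

lemma integrable_dirac' {f : ℝ → ℝ} (hf : Measurable f) (a : ℝ) :
    Integrable f (Measure.dirac a) := by
  refine ⟨hf.aestronglyMeasurable, ?_⟩
  rw [hasFiniteIntegral_iff_norm, lintegral_dirac' _ (by fun_prop)]
  exact ENNReal.ofReal_lt_top

lemma integrable_pow_of_four {μ : Measure ℝ} [IsProbabilityMeasure μ]
    (h4 : Integrable (fun x => x ^ 4) μ) {k : ℕ} (hk : k ≤ 4) :
    Integrable (fun x : ℝ => x ^ k) μ := by
  refine ((integrable_const (1 : ℝ)).add h4).mono' (by fun_prop) ?_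
  filter_upwards with x
  have hx4 : (0:ℝ) ≤ x ^ 4 := by positivity
  rw [norm_pow, Real.norm_eq_abs]
  simp only [Pi.add_apply]
  rcases le_total |x| 1 with h | h
  · have : |x| ^ k ≤ 1 := pow_le_one₀ (abs_nonneg x) h
    linarith
  · have h1 : |x| ^ k ≤ |x| ^ 4 := pow_le_pow_right₀ h hk
    have h2 : |x| ^ 4 = x ^ 4 := by rw [← abs_pow, abs_of_nonneg hx4]
    linarith

lemma pow_add_integrable (μ ν : Measure ℝ) [IsProbabilityMeasure μ] [IsProbabilityMeasure ν]
    (hμ : Integrable (fun x => x ^ 4) μ) (hν : Integrable (fun x => x ^ 4) ν)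
    {n : ℕ} (hn : n ≤ 4) :
    Integrable (fun p : ℝ × ℝ => (p.1 + p.2) ^ n) (μ.prod ν) := by
  have he : (fun p : ℝ × ℝ => (p.1 + p.2) ^ n)
      = fun p => ∑ j ∈ Finset.range (n + 1), p.1 ^ j * p.2 ^ (n - j) * (n.choose j : ℝ) := by
    funext p; rw [add_pow]
  rw [he]
  refine integrable_finset_sum _ fun j hj => ?_
  have hj' : j ≤ 4 := le_trans (Nat.le_of_lt_succ (Finset.mem_range.mp hj)) hn
  exact ((integrable_pow_of_four hμ hj').mul_prod
    (integrable_pow_of_four hν (le_trans (Nat.sub_le n j) hn))).mul_const _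

lemma integrable_pow_conv_s5 (μ ν : Measure ℝ) [IsProbabilityMeasure μ] [IsProbabilityMeasure ν]
    (hμ : Integrable (fun x => x ^ 4) μ) (hν : Integrable (fun x => x ^ 4) ν) :
    Integrable (fun x => x ^ 4) (μ.conv ν) := by
  rw [Measure.conv]
  exact (integrable_map_measure (by fun_prop) (by fun_prop)).mpr
    (pow_add_integrable μ ν hμ hν le_rfl)

lemma integral_pow_conv_s5 (μ ν : Measure ℝ) [IsProbabilityMeasure μ] [IsProbabilityMeasure ν]
    (hμ : Integrable (fun x => x ^ 4) μ) (hν : Integrable (fun x => x ^ 4) ν)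
    {n : ℕ} (hn : n ≤ 4) :
    ∫ x, x ^ n ∂(μ.conv ν)
      = ∑ j ∈ Finset.range (n + 1),
          (n.choose j : ℝ) * (∫ x, x ^ j ∂μ) * ∫ x, x ^ (n - j) ∂ν := by
  rw [Measure.conv, integral_map (by fun_prop) (by fun_prop)]
  have he : (fun p : ℝ × ℝ => (p.1 + p.2) ^ n)
      = fun p => ∑ j ∈ Finset.range (n + 1), p.1 ^ j * p.2 ^ (n - j) * (n.choose j : ℝ) := by
    funext p; rw [add_pow]
  rw [show (fun p : ℝ × ℝ => (p.1 + p.2) ^ n) = _ from he]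
  rw [integral_finset_sum]
  · refine Finset.sum_congr rfl fun j hj => ?_
    rw [integral_mul_const,
      integral_prod_mul (f := fun x : ℝ => x ^ j) (g := fun y : ℝ => y ^ (n - j))]
    ring
  · intro j hj
    have hj' : j ≤ 4 := le_trans (Nat.le_of_lt_succ (Finset.mem_range.mp hj)) hn
    exact ((integrable_pow_of_four hμ hj').mul_prod
      (integrable_pow_of_four hν (le_trans (Nat.sub_le n j) hn))).mul_const _

lemma integrable_pow_four_right (μ ν : Measure ℝ) [IsProbabilityMeasure μ]
    [IsProbabilityMeasure ν] (h : Integrable (fun x => x ^ 4) (μ.conv ν)) :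
    Integrable (fun x => x ^ 4) ν := by
  rw [Measure.conv] at h
  have h' : Integrable (fun p : ℝ × ℝ => (p.1 + p.2) ^ 4) (μ.prod ν) :=
    (integrable_map_measure (by fun_prop) (by fun_prop)).mp h
  have hae := h'.prod_right_ae
  haveI : (MeasureTheory.ae μ).NeBot := ae_neBot.mpr (IsProbabilityMeasure.ne_zero μ)
  obtain ⟨x, hx⟩ := hae.exists
  refine ((hx.add (integrable_const (x ^ 4))).const_mul 16).mono' (by fun_prop) ?_
  filter_upwards with y
  have h1 : ‖y ^ 4‖ = y ^ 4 := by
    rw [Real.norm_eq_abs, abs_of_nonneg (by positivity)]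
  rw [h1]
  simp only [Pi.add_apply]
  nlinarith [sq_nonneg ((x + y) + x), sq_nonneg ((x + y) - x), sq_nonneg ((x + y) * x),
    sq_nonneg ((x + y) ^ 2 - x ^ 2), sq_nonneg ((x + y) ^ 2 + x ^ 2), sq_nonneg (x + y),
    sq_nonneg x]

lemma convNPow_prob (ν : Measure ℝ) [IsProbabilityMeasure ν] (n : ℕ) :
    IsProbabilityMeasure (convNPow ν n) := by
  induction n with
  | zero => rw [convNPow]; infer_instance
  | succ n ih => rw [convNPow]; exact @Measure.probabilitymeasure_of_probabilitymeasures_conv _ _ _ _ _ _ ih _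

lemma convNPow_int4 (ν : Measure ℝ) [IsProbabilityMeasure ν]
    (hν : Integrable (fun x => x ^ 4) ν) (n : ℕ) :
    Integrable (fun x => x ^ 4) (convNPow ν n) := by
  induction n with
  | zero => rw [convNPow]; exact integrable_dirac' (by fun_prop) 0
  | succ n ih =>
    rw [convNPow]
    haveI := convNPow_prob ν n
    exact integrable_pow_conv_s5 _ _ ih hν

lemma convNPow_mean (ν : Measure ℝ) [IsProbabilityMeasure ν]
    (hν : Integrable (fun x => x ^ 4) ν) (n : ℕ) :
    ∫ x, x ∂(convNPow ν n) = n * ∫ x, x ∂ν := by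
  induction n with
  | zero => rw [convNPow]; simp [integral_dirac]
  | succ n ih =>
    rw [convNPow]
    haveI := convNPow_prob ν n
    have h := integral_pow_conv_s5 (convNPow ν n) ν (convNPow_int4 ν hν n) hν
      (n := 1) (by norm_num)
    simp only [Finset.sum_range_succ, Finset.sum_range_zero, pow_one, pow_zero] at h
    rw [h]
    simp [ih]
    ring

lemma convNPow_moments (ν : Measure ℝ) [IsProbabilityMeasure ν]
    (hν : Integrable (fun x => x ^ 4) ν) (ha : ∫ x, x ∂ν = 0) (n : ℕ) :
    (∫ x, x ∂(convNPow ν n) = 0) ∧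
    (∫ x, x ^ 2 ∂(convNPow ν n) = n * ∫ x, x ^ 2 ∂ν) ∧
    (∫ x, x ^ 3 ∂(convNPow ν n) = n * ∫ x, x ^ 3 ∂ν) ∧
    (∫ x, x ^ 4 ∂(convNPow ν n)
      = n * (∫ x, x ^ 4 ∂ν) + 3 * n * ((n : ℝ) - 1) * (∫ x, x ^ 2 ∂ν) ^ 2) := by
  induction n with
  | zero => rw [convNPow]; simp [integral_dirac]
  | succ n ih =>
    obtain ⟨ih1, ih2, ih3, ih4⟩ := ih
    haveI := convNPow_prob ν n
    have hint := convNPow_int4 ν hν n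
    have h1 := integral_pow_conv_s5 (convNPow ν n) ν hint hν (n := 1) (by norm_num)
    have h2 := integral_pow_conv_s5 (convNPow ν n) ν hint hν (n := 2) (by norm_num)
    have h3 := integral_pow_conv_s5 (convNPow ν n) ν hint hν (n := 3) (by norm_num)
    have h4 := integral_pow_conv_s5 (convNPow ν n) ν hint hν (n := 4) (by norm_num)
    simp only [Finset.sum_range_succ, Finset.sum_range_zero, pow_one, pow_zero,
      Nat.choose_zero_right, Nat.choose_self, Nat.choose_one_right, Nat.choose_two_right,
      integral_const, measure_univ, ENNReal.toReal_one, smul_eq_mul, one_mul, mul_one,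
      Nat.cast_one, Nat.cast_ofNat, zero_add] at h1 h2 h3 h4
    rw [convNPow]
    norm_num at h1 h2 h3 h4 ⊢
    rw [h1, h2, h3, h4, ih1, ih2, ih3, ih4, ha]
    refine ⟨by ring, by ring, by ring, by ring⟩

theorem kurtosis_ge_of_N_divisible
    (μ ν : Measure ℝ) [IsProbabilityMeasure μ] [IsProbabilityMeasure ν]
    (N : ℕ) (hN : 0 < N) (hdiv : μ = convNPow ν N)
    (hmean : ∫ x, x ∂μ = 0) (hvar : ∫ x, x ^ 2 ∂μ = 1)
    (h4 : Integrable (fun x => x ^ 4) μ) :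
    (∫ x, x ^ 4 ∂μ) - 3 ≥ -2 / N := by
  obtain ⟨M, rfl⟩ : ∃ M, N = M + 1 := ⟨N - 1, (Nat.succ_pred_eq_of_pos hN).symm⟩
  haveI := convNPow_prob ν M
  have hν4 : Integrable (fun x => x ^ 4) ν := by
    apply integrable_pow_four_right (convNPow ν M) ν
    rw [← show convNPow ν (M + 1) = (convNPow ν M).conv ν from rfl, ← hdiv]
    exact h4
  -- mean of ν is 0
  have ha : ∫ x, x ∂ν = 0 := by
    have := convNPow_mean ν hν4 (M + 1)
    rw [← hdiv, hmean] at this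
    have hMpos : (0:ℝ) < (M:ℝ) + 1 := by positivity
    have := this.symm
    push_cast at this
    rcases mul_eq_zero.mp this with h | h
    · linarith
    · exact h
  obtain ⟨_, hm2, _, hm4⟩ := convNPow_moments ν hν4 ha (M + 1)
  rw [← hdiv] at hm2 hm4
  set b := ∫ x, x ^ 2 ∂ν with hb
  set d := ∫ x, x ^ 4 ∂ν with hd
  have hn : (0:ℝ) < (M:ℝ) + 1 := by positivity
  have hbval : ((M:ℝ) + 1) * b = 1 := by
    rw [hvar] at hm2; push_cast at hm2; linarith [hm2]
  -- d ≥ b ^ 2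
  have hdb : b ^ 2 ≤ d := by
    have h2 := integrable_pow_of_four hν4 (k := 2) (by norm_num)
    have h0 : 0 ≤ ∫ x, (x ^ 2 - b) ^ 2 ∂ν := integral_nonneg fun x => sq_nonneg _
    have he : (fun x : ℝ => (x ^ 2 - b) ^ 2) = fun x => x ^ 4 - (2 * b) * x ^ 2 + b ^ 2 := by
      funext x; ring
    rw [he] at h0
    have hI1 : Integrable (fun x : ℝ => x ^ 4 - 2 * b * x ^ 2) ν :=
      hν4.sub (h2.const_mul (2 * b))
    rw [integral_add hI1 (integrable_const _),
      integral_sub hν4 (h2.const_mul (2 * b)), integral_const_mul, integral_const] at h0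
    simp only [measure_univ, probReal_univ, ENNReal.toReal_one, smul_eq_mul, one_mul] at h0
    nlinarith [h0]
  rw [hm4]
  have hb1 : b = 1 / ((M:ℝ) + 1) := by
    field_simp
    linarith
  rw [ge_iff_le, ← sub_nonneg]
  have hfinal : ((M:ℝ) + 1) * d + 3 * ((M:ℝ) + 1) * (((M:ℝ) + 1) - 1) * b ^ 2 - 3
      - (-2 / ((M:ℝ) + 1)) = ((M:ℝ) + 1) * (d - (1 / ((M:ℝ) + 1)) ^ 2) := by
    rw [hb1]
    field_simp
    ring
  push_cast
  rw [hfinal]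
  exact mul_nonneg hn.le (sub_nonneg.mpr (hb1 ▸ hdb))
end

section
/- The N-fold classical convolution μ of the rescaled symmetric Bernoulli measure ν = (1/2)δ_{1/√N} + (1/2)δ_{-1/√N} has mean 0, variance 1, and fourth moment m₄(μ) = 3 - 2/N; in particular the bound Kurt(μ) ≥ -2/N for N-divisible measures is sharp. -/
/-!
Convolving with `(δ_a + δ_{-a})/2` averages the shifts `x ↦ x + a` and `x ↦ x - a`, so in the
binomial expansion of the moments of `μ ∗ ν` the odd powers of `a` cancel:
`m₂ ↦ m₂ + a²` and `m₄ ↦ m₄ + 6 a² m₂ + a⁴`. Induction on the number of factors gives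
`m₂ = n a²` and `m₄ = (3 n² - 2 n) a⁴`, and `a = 1/√N` yields the claim.
-/

open MeasureTheory

open scoped ENNReal

noncomputable def symmBernoulli (a : ℝ) : Measure ℝ :=
  (1 / 2 : ℝ≥0∞) • Measure.dirac a + (1 / 2 : ℝ≥0∞) • Measure.dirac (-a)

instance (a : ℝ) : IsProbabilityMeasure (symmBernoulli a) :=
  ⟨by simp [symmBernoulli, ENNReal.inv_two_add_inv_two]⟩

instance (a : ℝ) (n : ℕ) : IsProbabilityMeasure (convNPow (symmBernoulli a) n) := by
  induction n with
  | zero => exact inferInstanceAs (IsProbabilityMeasure (Measure.dirac 0))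
  | succ n _ => exact inferInstanceAs (IsProbabilityMeasure ((convNPow _ n) ∗ _))

variable {μ : Measure ℝ} {a : ℝ} {f : ℝ → ℝ}

lemma conv_symmBernoulli (μ : Measure ℝ) [SFinite μ] (a : ℝ) :
    μ ∗ symmBernoulli a = (1 / 2 : ℝ≥0∞) • μ.map (· + a) + (1 / 2 : ℝ≥0∞) • μ.map (· + -a) := by
  rw [symmBernoulli, Measure.conv_add, Measure.conv_smul_right, Measure.conv_smul_right,
    Measure.conv_dirac, Measure.conv_dirac]

lemma integrable_smul_map_add (hf : Measurable f) {b : ℝ}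
    (hb : Integrable (fun x ↦ f (x + b)) μ) {c : ℝ≥0∞} (hc : c ≠ ∞) :
    Integrable f (c • μ.map (· + b)) :=
  ((integrable_map_measure hf.aestronglyMeasurable (by fun_prop)).mpr hb).smul_measure hc

lemma integrable_conv_symmBernoulli [SFinite μ] (hf : Measurable f)
    (hplus : Integrable (fun x ↦ f (x + a)) μ) (hminus : Integrable (fun x ↦ f (x - a)) μ) :
    Integrable f (μ ∗ symmBernoulli a) := by
  simp_rw [sub_eq_add_neg] at hminus
  rw [conv_symmBernoulli]
  exact (integrable_smul_map_add hf hplus (by simp)).add_measure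
    (integrable_smul_map_add hf hminus (by simp))

lemma integral_conv_symmBernoulli [SFinite μ] (hf : Measurable f)
    (hplus : Integrable (fun x ↦ f (x + a)) μ) (hminus : Integrable (fun x ↦ f (x - a)) μ) :
    ∫ x, f x ∂(μ ∗ symmBernoulli a) = ∫ x, (f (x + a) + f (x - a)) / 2 ∂μ := by
  simp_rw [sub_eq_add_neg] at hminus ⊢
  rw [conv_symmBernoulli, integral_add_measure (integrable_smul_map_add hf hplus (by simp))
      (integrable_smul_map_add hf hminus (by simp)),
    integral_smul_measure, integral_smul_measure,
    integral_map (by fun_prop) hf.aestronglyMeasurable,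
    integral_map (by fun_prop) hf.aestronglyMeasurable, integral_div, integral_add hplus hminus]
  simp only [one_div, ENNReal.toReal_inv, ENNReal.toReal_ofNat, smul_eq_mul]
  ring

lemma integrable_pow_add (h : ∀ k, Integrable (fun x : ℝ ↦ x ^ k) μ) (b : ℝ) (k : ℕ) :
    Integrable (fun x ↦ (x + b) ^ k) μ := by
  simp_rw [add_pow]
  exact integrable_finsetSum _ fun i _ ↦ ((h i).mul_const _).mul_const _

lemma integrable_pow_conv_symmBernoulli [SFinite μ] (h : ∀ k, Integrable (fun x : ℝ ↦ x ^ k) μ)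
    (k : ℕ) : Integrable (fun x ↦ x ^ k) (μ ∗ symmBernoulli a) :=
  integrable_conv_symmBernoulli (by fun_prop) (integrable_pow_add h a k)
    (by simpa [sub_eq_add_neg] using integrable_pow_add h (-a) k)

lemma integral_pow_conv_symmBernoulli [SFinite μ] (h : ∀ k, Integrable (fun x : ℝ ↦ x ^ k) μ)
    (k : ℕ) :
    ∫ x, x ^ k ∂(μ ∗ symmBernoulli a) = ∫ x, ((x + a) ^ k + (x - a) ^ k) / 2 ∂μ :=
  integral_conv_symmBernoulli (by fun_prop) (integrable_pow_add h a k)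
    (by simpa [sub_eq_add_neg] using integrable_pow_add h (-a) k)

lemma integral_id_conv_symmBernoulli [SFinite μ] (h : ∀ k, Integrable (fun x : ℝ ↦ x ^ k) μ) :
    ∫ x, x ∂(μ ∗ symmBernoulli a) = ∫ x, x ∂μ := by
  have h₁ := integral_pow_conv_symmBernoulli (a := a) h 1
  simp only [pow_one] at h₁
  rw [h₁]
  congr 1 with x
  ring

lemma integral_sq_conv_symmBernoulli [IsProbabilityMeasure μ]
    (h : ∀ k, Integrable (fun x : ℝ ↦ x ^ k) μ) :
    ∫ x, x ^ 2 ∂(μ ∗ symmBernoulli a) = ∫ x, x ^ 2 ∂μ + a ^ 2 := calc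
  _ = ∫ x, x ^ 2 + a ^ 2 ∂μ := by
    rw [integral_pow_conv_symmBernoulli h]
    congr 1 with x
    ring
  _ = _ := by simp [integral_add (h 2) (integrable_const _)]

lemma integral_pow_four_conv_symmBernoulli [IsProbabilityMeasure μ]
    (h : ∀ k, Integrable (fun x : ℝ ↦ x ^ k) μ) :
    ∫ x, x ^ 4 ∂(μ ∗ symmBernoulli a) = ∫ x, x ^ 4 ∂μ + 6 * a ^ 2 * ∫ x, x ^ 2 ∂μ + a ^ 4 := calc
  _ = ∫ x, x ^ 4 + 6 * a ^ 2 * x ^ 2 + a ^ 4 ∂μ := by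
    rw [integral_pow_conv_symmBernoulli h]
    congr 1 with x
    ring
  _ = _ := by
    have h₄₂ : Integrable (fun x ↦ x ^ 4 + 6 * a ^ 2 * x ^ 2) μ := (h 4).add ((h 2).const_mul _)
    rw [integral_add h₄₂ (integrable_const _), integral_add (h 4) ((h 2).const_mul _),
      integral_const_mul]
    simp

lemma integrable_pow_convNPow_symmBernoulli (a : ℝ) (n k : ℕ) :
    Integrable (fun x : ℝ ↦ x ^ k) (convNPow (symmBernoulli a) n) := by
  induction n generalizing k with
  | zero => exact integrable_dirac enorm_lt_top
  | succ n ih => exact integrable_pow_conv_symmBernoulli ih k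

lemma integral_id_convNPow_symmBernoulli (a : ℝ) (n : ℕ) :
    ∫ x, x ∂(convNPow (symmBernoulli a) n) = 0 := by
  induction n with
  | zero => simp [convNPow]
  | succ n ih =>
    rw [convNPow, integral_id_conv_symmBernoulli (integrable_pow_convNPow_symmBernoulli a n), ih]

lemma integral_sq_convNPow_symmBernoulli (a : ℝ) (n : ℕ) :
    ∫ x, x ^ 2 ∂(convNPow (symmBernoulli a) n) = n * a ^ 2 := by
  induction n with
  | zero => simp [convNPow]
  | succ n ih =>
    rw [convNPow, integral_sq_conv_symmBernoulli (integrable_pow_convNPow_symmBernoulli a n), ih]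
    push_cast
    ring

lemma integral_pow_four_convNPow_symmBernoulli (a : ℝ) (n : ℕ) :
    ∫ x, x ^ 4 ∂(convNPow (symmBernoulli a) n) = (3 * n ^ 2 - 2 * n) * a ^ 4 := by
  induction n with
  | zero => simp [convNPow]
  | succ n ih =>
    rw [convNPow, integral_pow_four_conv_symmBernoulli (integrable_pow_convNPow_symmBernoulli a n),
      ih, integral_sq_convNPow_symmBernoulli]
    push_cast
    ring

theorem bernoulli_conv_pow_moments (N : ℕ) (hN : 0 < N) :
    let ν : Measure ℝ :=
      (1 / 2 : ENNReal) • Measure.dirac (1 / Real.sqrt N) +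
        (1 / 2 : ENNReal) • Measure.dirac (-(1 / Real.sqrt N))
    let μ := convNPow ν N
    (∫ x, x ∂μ = 0) ∧ (∫ x, x ^ 2 ∂μ = 1) ∧
      (∫ x, x ^ 4 ∂μ = 3 - 2 / N) := by
  intro ν μ
  have hμ : μ = convNPow (symmBernoulli (1 / Real.sqrt N)) N := rfl
  have hN' : (N : ℝ) ≠ 0 := by positivity
  have ha : (1 / Real.sqrt N) ^ 2 = 1 / N := by
    rw [div_pow, one_pow, Real.sq_sqrt N.cast_nonneg]
  rw [hμ]
  refine ⟨integral_id_convNPow_symmBernoulli _ N, ?_, ?_⟩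
  · rw [integral_sq_convNPow_symmBernoulli, ha]
    field_simp
  · rw [integral_pow_four_convNPow_symmBernoulli, show 4 = 2 * 2 from rfl, pow_mul, ha]
    field_simp
end
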